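/- Let C, D, E be categories, let P : C ⥤ E and Q : D ⥤ E be functors, let e be an object of E, and suppose given an adjunction L ⊣ R with L : C ⥤ D and R : D ⥤ C together with a natural isomorphism ε : Q ≅ R ⋙ P (componentwise, ε_d : Q(d) ≅ P(R(d))). Then there is an induced adjunction L' ⊣ R' between the structured arrow categories StructuredArrow e P and StructuredArrow e Q, where R' sends an object (d, λ : e ⟶ Q(d)) to (R(d), ε_d ∘ λ : e ⟶ P(R(d))), and L' sends an object (c, λ : e ⟶ P(c)) to (L(c), ε⁻¹_{L(c)} ∘ P(η_c) ∘ λ : e ⟶ Q(L(c))), with η the unit of the adjunction L ⊣ R. -/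

import Mathlib

/-!
Both functors are instances of `StructuredArrow.map₂`, along `β = P η ≫ ε⁻¹ L` and `ε`. Since
`β ≫ ε L = P η`, the hom-equivalence of `L ⊣ R` transports the compatibility condition of a
morphism `L' X ⟶ Y` to that of the adjoint morphism `X ⟶ R' Y`; the converse uses that `ε` is
invertible.
-/

open CategoryTheory

namespace CategoryTheory.StructuredArrow

variable {C D E : Type*} [Category C] [Category D] [Category E] {P : C ⥤ E} {Q : D ⥤ E}

theorem map₂_id_obj {F : C ⥤ D} (e : E) (β : P ⟶ F ⋙ Q) (X : StructuredArrow e P) :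
    (map₂ (G := 𝟭 E) (𝟙 e) β).obj X = mk (T := Q) (X.hom ≫ β.app X.right) :=
  obj_ext _ _ rfl (by simp)

variable {L : C ⥤ D} {R : D ⥤ C} (adj : L ⊣ R) (β : P ⟶ L ⋙ Q) (γ : Q ≅ R ⋙ P)

theorem app_comp_map_comp_hom_app
    (h : ∀ c, β.app c ≫ γ.hom.app (L.obj c) = P.map (adj.unit.app c)) {c : C} {d : D}
    (f : L.obj c ⟶ d) : β.app c ≫ Q.map f ≫ γ.hom.app d = P.map (adj.homEquiv c d f) := by
  rw [γ.hom.naturality, ← Category.assoc, h, Adjunction.homEquiv_unit, Functor.comp_map,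
    Functor.map_comp]

def map₂Adjunction (e : E)
    (h : ∀ c, β.app c ≫ γ.hom.app (L.obj c) = P.map (adj.unit.app c)) :
    map₂ (G := 𝟭 E) (𝟙 e) β ⊣ map₂ (G := 𝟭 E) (𝟙 e) γ.hom :=
  Adjunction.mkOfHomEquiv
    { homEquiv X Y :=
        { toFun f := homMk (adj.homEquiv _ _ f.right) (by
            rw [← app_comp_map_comp_hom_app adj β γ h]
            simpa using f.w =≫ γ.hom.app Y.right)
          invFun g := homMk ((adj.homEquiv _ _).symm g.right) (by
            rw [← cancel_mono (γ.hom.app Y.right)]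
            simp only [map₂_obj_hom, Category.id_comp, Functor.id_map, Category.assoc]
            rw [app_comp_map_comp_hom_app adj β γ h, Equiv.apply_symm_apply]
            simp)
          left_inv f := by ext; simp
          right_inv g := by ext; simp }
      homEquiv_naturality_left_symm f g := by
        ext; exact adj.homEquiv_naturality_left_symm f.right g.right
      homEquiv_naturality_right f g := by
        ext; exact adj.homEquiv_naturality_right f.right g.right }

end CategoryTheory.StructuredArrow

/-- Given functors `P : C ⥤ E`, `Q : D ⥤ E`, an object `e : E`, an adjunction `L ⊣ R`
and a natural isomorphism `ε : Q ≅ R ⋙ P`, there is an induced adjunction `L' ⊣ R'`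
between the structured arrow categories, with `R'` sending `(d, fun)` to
`(R d, ε_d ∘ fun)` and `L'` sending `(c, fun)` to `(L c, ε⁻¹_{L c} ∘ P (η_c) ∘ fun)`. -/
theorem stmt_0 {C D E : Type*} [Category C] [Category D] [Category E]
    (P : C ⥤ E) (Q : D ⥤ E) (e : E)
    (L : C ⥤ D) (R : D ⥤ C) (adj : L ⊣ R) (ε : Q ≅ R ⋙ P) :
    ∃ (L' : StructuredArrow e P ⥤ StructuredArrow e Q)
      (R' : StructuredArrow e Q ⥤ StructuredArrow e P),
      Nonempty (L' ⊣ R') ∧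
      (∀ X : StructuredArrow e P,
        L'.obj X =
          StructuredArrow.mk
            (X.hom ≫ P.map (adj.unit.app X.right) ≫ ε.inv.app (L.obj X.right))) ∧
      (∀ Y : StructuredArrow e Q,
        R'.obj Y = StructuredArrow.mk
          ((Y.hom ≫ ε.hom.app Y.right : e ⟶ P.obj (R.obj Y.right)))) := by
  let β : P ⟶ L ⋙ Q := Functor.whiskerRight adj.unit P ≫ Functor.whiskerLeft L ε.inv
  refine ⟨_, _, ⟨StructuredArrow.map₂Adjunction adj β ε e fun c => by simp [β]⟩,
    fun X => ?_, StructuredArrow.map₂_id_obj e ε.hom⟩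
  simpa [β] using StructuredArrow.map₂_id_obj e β X
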